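/- Let A be a right coherent ring and X a contravariantly finite subcategory of mod-A containing all finitely generated projective A-modules. Then for every F in mod-X there exists an exact sequence 0 → F_0 → F → Hom_A(-, θ(F))|_X → F_1 → 0 in mod-X with F_0 and F_1 in mod_0-X, where θ(F) := coker(X_1 → X_0) for any projective presentation Hom(-,X_1)|_X → Hom(-,X_0)|_X → F → 0 of F. -/

import Mathlib

/- Common setup: right modules over a ring are realized as left modules over the opposite
ring; `mod-X` (finitely presented additive functors on a subcategory `X` of `mod-Λ`) is
realized inside the abelian category of contravariant `AddCommGrp`-valued functors on `X`. -/

open CategoryTheory CategoryTheory.Limits Opposite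

universe u

noncomputable section

namespace RelAus

attribute [local instance] CategoryTheory.Abelian.hasFiniteBiproducts

/-- `N` is a direct summand of `M`. -/
def IsDirectSummand {C : Type*} [Category C] (N M : C) : Prop :=
  ∃ (i : N ⟶ M) (r : M ⟶ N), i ≫ r = 𝟙 N

/-- `M ∈ add Xbar`: `M` is a direct summand of a finite direct sum of copies of `Xbar`. -/
def InAdd {R : Type u} [Ring R] (Xbar M : ModuleCat.{u} R) : Prop :=
  ∃ n : ℕ, IsDirectSummand M (ModuleCat.of R (Fin n → Xbar))

/-- `Xbar` is an additive generator of the class `𝒮` of modules: `𝒮 = add Xbar`. -/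
def IsAddGen {R : Type u} [Ring R] (𝒮 : Set (ModuleCat.{u} R)) (Xbar : ModuleCat.{u} R) : Prop :=
  Xbar ∈ 𝒮 ∧ ∀ M : ModuleCat.{u} R, M ∈ 𝒮 ↔ InAdd Xbar M

/-- An object of an additive category is indecomposable if it is nonzero and in any biproduct
decomposition one of the two factors is zero. -/
def IsIndecObj {C : Type*} [Category C] [Preadditive C] [HasBinaryBiproducts C] (N : C) : Prop :=
  ¬ IsZero N ∧ ∀ A B : C, Nonempty (N ≅ A ⊞ B) → IsZero A ∨ IsZero B

/-- The cardinality of the set of isomorphism classes of indecomposable direct summands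
of the module `T`. -/
def numIndecSummands {R : Type u} [Ring R] (T : ModuleCat.{u} R) : Cardinal :=
  Cardinal.mk {q : _root_.Quotient (isIsomorphicSetoid (ModuleCat.{u} R)) //
    ∃ N : ModuleCat.{u} R, Quotient.mk (isIsomorphicSetoid _) N = q ∧
      IsIndecObj N ∧ IsDirectSummand N T}

/-- The cardinality of the set of isomorphism classes of indecomposable (finitely generated)
projective `R`-modules. -/
def numIndecProj (R : Type u) [Ring R] : Cardinal :=
  Cardinal.mk {q : _root_.Quotient (isIsomorphicSetoid (ModuleCat.{u} R)) //
    ∃ N : ModuleCat.{u} R, Quotient.mk (isIsomorphicSetoid _) N = q ∧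
      IsIndecObj N ∧ Projective N ∧ Module.Finite R N}

/-- `T` has projective dimension at most one: there is a short exact sequence
`0 → P₁ → P₀ → T → 0` with `P₁`, `P₀` projective. -/
def ModPdLeOne {R : Type u} [Ring R] (T : ModuleCat.{u} R) : Prop :=
  ∃ (P₁ P₀ : ModuleCat.{u} R) (i : P₁ ⟶ P₀) (p : P₀ ⟶ T) (w : i ≫ p = 0),
    Projective P₁ ∧ Projective P₀ ∧ (ShortComplex.mk i p w).ShortExact

/-- `T` has injective dimension at most one: there is a short exact sequence
`0 → T → I₀ → I₁ → 0` with `I₀`, `I₁` injective. -/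
def ModIdLeOne {R : Type u} [Ring R] (T : ModuleCat.{u} R) : Prop :=
  ∃ (I₀ I₁ : ModuleCat.{u} R) (i : T ⟶ I₀) (p : I₀ ⟶ I₁) (w : i ≫ p = 0),
    Injective I₀ ∧ Injective I₁ ∧ (ShortComplex.mk i p w).ShortExact

/-- `T` is rigid, i.e. `Ext¹_R(T,T) = 0`: every self-extension of `T` splits. -/
def ModRigid {R : Type u} [Ring R] (T : ModuleCat.{u} R) : Prop :=
  ∀ (E : ModuleCat.{u} R) (i : T ⟶ E) (p : E ⟶ T) (w : i ≫ p = 0),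
    (ShortComplex.mk i p w).ShortExact → Nonempty (ShortComplex.mk i p w).Splitting

/-- `T` is a tilting `R`-module: `pd T ≤ 1`, `Ext¹_R(T,T) = 0`, and the number of isomorphism
classes of indecomposable direct summands of `T` equals the number of isomorphism classes of
indecomposable projective `R`-modules. -/
structure IsTiltingModule {R : Type u} [Ring R] (T : ModuleCat.{u} R) : Prop where
  pd_le_one : ModPdLeOne T
  rigid : ModRigid T
  summands : numIndecSummands T = numIndecProj R

/-- `T` is a cotilting `R`-module: `id T ≤ 1`, `Ext¹_R(T,T) = 0`, and the same counting
condition as for tilting modules. -/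
structure IsCotiltingModule {R : Type u} [Ring R] (T : ModuleCat.{u} R) : Prop where
  id_le_one : ModIdLeOne T
  rigid : ModRigid T
  summands : numIndecSummands T = numIndecProj R

/-- `M` is a (finitely generated) Gorenstein projective `R`-module: `M` is a syzygy of a
totally acyclic complex of finitely generated projective modules, i.e. of an acyclic complex
`P` of projectives such that `Hom_R(P, Q)` is acyclic for every projective `Q`. -/
def IsGProj {R : Type u} [Ring R] (M : ModuleCat.{u} R) : Prop :=
  ∃ P : CochainComplex (ModuleCat.{u} R) ℤ,
    (∀ n, Projective (P.X n)) ∧ (∀ n, Module.Finite R (P.X n)) ∧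
    (∀ n, P.ExactAt n) ∧
    (∀ Q : ModuleCat.{u} R, Projective Q →
      ∀ n, (((preadditiveYoneda.obj Q).mapHomologicalComplex _).obj P.op).ExactAt n) ∧
    ∃ n : ℤ, Nonempty (M ≅ kernel (P.d n (n + 1)))

/-- The class of finitely generated Gorenstein projective `R`-modules.  Applied to `R = Λᵐᵒᵖ`
this is `Gprj-Λ`, the Gorenstein projective right `Λ`-modules. -/
def GprjSet (R : Type u) [Ring R] : Set (ModuleCat.{u} R) :=
  {M | Module.Finite R M ∧ IsGProj M}

/-- The category of finitely generated `R`-modules. -/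
abbrev fgMod (R : Type u) [Ring R] := ObjectProperty.FullSubcategory (fun M : ModuleCat.{u} R => Module.Finite R M)

/-- `M` is basic: no indecomposable module occurs twice in a direct sum decomposition. -/
def IsBasic {R : Type u} [Ring R] (M : ModuleCat.{u} R) : Prop :=
  ∀ (N A : ModuleCat.{u} R), IsIndecObj N → ¬ Nonempty (M ≅ (N ⊞ N) ⊞ A)

/-- Two rings are Morita equivalent if their categories of finitely generated modules are
equivalent.  Applied to the opposite rings, this says that the categories of finitely
generated right modules are equivalent. -/
def MoritaEq (R S : Type u) [Ring R] [Ring S] : Prop :=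
  Nonempty (fgMod R ≌ fgMod S)

/-- A ring `A` is right coherent: every finitely generated right ideal of `A` (i.e. left ideal
of `Aᵐᵒᵖ`) is finitely presented as a right `A`-module. -/
def RightCoherent (A : Type u) [Ring A] : Prop :=
  ∀ I : Ideal Aᵐᵒᵖ, I.FG → Module.FinitePresentation Aᵐᵒᵖ I

/-- `Λ` is an (Iwanaga-)Gorenstein ring of G-dimension one: the injective dimension of `Λ`
as a right module over itself and as a left module over itself are both equal to `1`. -/
def GorensteinDimOne (Λ : Type u) [Ring Λ] : Prop :=
  (ModIdLeOne (ModuleCat.of Λᵐᵒᵖ Λ) ∧ ¬ Injective (ModuleCat.of Λᵐᵒᵖ Λ)) ∧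
  (ModIdLeOne (ModuleCat.of Λ Λ) ∧ ¬ Injective (ModuleCat.of Λ Λ))

variable {Λ : Type u} [Ring Λ]

/-- The category of right `Λ`-modules, realized as left modules over `Λᵐᵒᵖ`. -/
abbrev RMod (Λ : Type u) [Ring Λ] := ModuleCat.{u} Λᵐᵒᵖ

/-- Given the end `ε : Q ⟶ Xbar` of a projective presentation of `Xbar`, the evaluation
`T = ζ^X_{Xbar}(Xbar)` of the intermediate extension at `Xbar`: concretely, it is the set of
endomorphisms of `Xbar` that factor through `ε`, which is a right ideal of
`Γ = End_Λ(Xbar)`, i.e. a `Γᵐᵒᵖ`-submodule of `Γ` (right `Γ`-modules being realized as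
`Γᵐᵒᵖ`-modules). -/
def zetaEvalSub {Q Xbar : RMod Λ} (ε : Q ⟶ Xbar) :
    Submodule (End Xbar)ᵐᵒᵖ (End Xbar) where
  carrier := {g : End Xbar | ∃ h : Xbar ⟶ Q, h ≫ ε = g}
  add_mem' := by
    rintro a b ⟨h₁, rfl⟩ ⟨h₂, rfl⟩
    exact ⟨h₁ + h₂, by simp [Preadditive.add_comp]⟩
  zero_mem' := ⟨0, by simp⟩
  smul_mem' := by
    rintro e g ⟨h, rfl⟩
    exact ⟨e.unop ≫ h, by simp [Category.assoc]⟩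

/-- `Xm` lies in `⊥Λ`, i.e. `Ext^i_Λ(Xm, Λ) = 0` for all `i ≥ 1`, where `Λ` is regarded as a
right module over itself. -/
def MemPerp [HasExt.{u+1} (RMod Λ)] (Xm : RMod Λ) : Prop :=
  ∀ i : ℕ, 1 ≤ i → ∀ x : Abelian.Ext Xm (ModuleCat.of Λᵐᵒᵖ Λ) i, x = 0

/-- The standing hypotheses on a class `𝒳` of right `Λ`-modules: it consists of modules
belonging to `mod-Λ` (described by the predicate `memP`), it is additively closed and closed
under direct summands (hence a full additive subcategory of `mod-Λ` closed under summands),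
it contains all the projective modules of `mod-Λ`, and it is contravariantly finite in
`mod-Λ`, i.e. every module in `mod-Λ` has a right `𝒳`-approximation. -/
structure GoodSub (memP : RMod Λ → Prop) (𝒳 : Set (RMod Λ)) : Prop where
  mem_mod : ∀ M ∈ 𝒳, memP M
  sum_mem : ∀ M N : RMod Λ, M ∈ 𝒳 → N ∈ 𝒳 → ModuleCat.of Λᵐᵒᵖ (M × N) ∈ 𝒳
  summand_mem : ∀ M N : RMod Λ, M ∈ 𝒳 → IsDirectSummand N M → N ∈ 𝒳
  proj_mem : ∀ P : RMod Λ, memP P → Projective P → P ∈ 𝒳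
  approx : ∀ M : RMod Λ, memP M → ∃ X₀ ∈ 𝒳, ∃ f : X₀ ⟶ M,
    ∀ X' ∈ 𝒳, ∀ g : X' ⟶ M, ∃ h : X' ⟶ X₀, h ≫ f = g

/-- `𝒳` is closed under syzygies: for every short exact sequence `0 → Ω → P → X' → 0` with
`X' ∈ 𝒳` and `P` a finitely generated projective module, `Ω ∈ 𝒳`. -/
def ClosedUnderSyzygies (𝒳 : Set (RMod Λ)) : Prop :=
  ∀ (Ω P X' : RMod Λ), X' ∈ 𝒳 → Projective P → Module.Finite Λᵐᵒᵖ P →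
    ∀ (i : Ω ⟶ P) (p : P ⟶ X') (w : i ≫ p = 0),
      (ShortComplex.mk i p w).ShortExact → Ω ∈ 𝒳

/-- `𝒳` is closed under submodules. -/
def ClosedUnderSubmodules (𝒳 : Set (RMod Λ)) : Prop :=
  ∀ (N X' : RMod Λ), X' ∈ 𝒳 → ∀ i : N ⟶ X', Mono i → N ∈ 𝒳

section FunctorCategory

variable (𝒳 : Set (RMod Λ))

/-- The subcategory `X`, as a full subcategory of the category of right `Λ`-modules. -/
abbrev XCat := ObjectProperty.FullSubcategory (fun M : RMod Λ => M ∈ 𝒳)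

/-- The ambient abelian category of contravariant `AddCommGrp`-valued functors on `X`;
`mod-X` is its full subcategory of finitely presented functors (see `FinPres`). -/
abbrev FunCat := (XCat 𝒳)ᵒᵖ ⥤ AddCommGrpCat.{u}

/-- The restricted Yoneda functor `M ↦ Hom_Λ(-, M)|_X`.  On an arbitrary module `M` it
gives `θ_ρ(M)`; on objects of `X` it gives the representable functors, which are exactly the
projective objects of `mod-X`. -/
def resY : RMod Λ ⥤ FunCat 𝒳 :=
  preadditiveYoneda ⋙
    (Functor.whiskeringLeft (XCat 𝒳)ᵒᵖ (RMod Λ)ᵒᵖ AddCommGrpCat.{u}).obj (ObjectProperty.ι _).op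

/-- `F` is a finitely presented functor on `X`, i.e. an object of `mod-X`: there is an exact
sequence `Hom(-,X₁)|_X ⟶ Hom(-,X₀)|_X ⟶ F ⟶ 0` with `X₁, X₀ ∈ 𝒳`. -/
def FinPres (F : FunCat 𝒳) : Prop :=
  ∃ (X₁ X₀ : RMod Λ) (_ : X₁ ∈ 𝒳) (_ : X₀ ∈ 𝒳) (d : X₁ ⟶ X₀),
    Nonempty (F ≅ cokernel ((resY 𝒳).map d))

/-- `F` vanishes on all projective `Λ`-modules, i.e. `F` lies in `mod₀-X`. -/
def Vanish0 (F : FunCat 𝒳) : Prop :=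
  ∀ P : XCat 𝒳, Projective P.obj → IsZero (F.obj (op P))

lemma resY_comp_zero {P Q M : RMod Λ} (d : P ⟶ Q) (ε : Q ⟶ M) (w : d ≫ ε = 0) :
    (resY 𝒳).map d ≫ (resY 𝒳).map ε = 0 := by
  rw [← Functor.map_comp, w]
  simp only [resY, Functor.comp_map, Functor.map_zero]
  ext
  rfl

/-- Given a projective presentation `P ⟶ Q ⟶ M ⟶ 0` of `M`, the canonical natural map
`γ_M : θ_λ(M) ⟶ θ_ρ(M)` induced by the identity of `M`, where
`θ_λ(M) = coker(Hom(-,P)|_X → Hom(-,Q)|_X)` and `θ_ρ(M) = Hom(-,M)|_X`. -/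
def gammaMap {P Q M : RMod Λ} (d : P ⟶ Q) (ε : Q ⟶ M) (w : d ≫ ε = 0) :
    cokernel ((resY 𝒳).map d) ⟶ (resY 𝒳).obj M :=
  cokernel.desc _ ((resY 𝒳).map ε) (resY_comp_zero 𝒳 d ε w)

/-- The intermediate extension `ζ^X_M := Im (γ_M)`. -/
def zetaObj {P Q M : RMod Λ} (d : P ⟶ Q) (ε : Q ⟶ M) (w : d ≫ ε = 0) : FunCat 𝒳 :=
  image (gammaMap 𝒳 d ε w)

/-- The unit map `coker(Hom(-,X₁)|_X → Hom(-,X₀)|_X) ⟶ Hom(-, coker(X₁ → X₀))|_X`, i.e.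
the unit `F ⟶ θ_ρ θ (F)` of the adjunction `(θ, θ_ρ)` evaluated on a functor presented by
`d' : X₁ ⟶ X₀`. -/
def unitMap {X₁ X₀ : RMod Λ} (d' : X₁ ⟶ X₀) :
    cokernel ((resY 𝒳).map d') ⟶ (resY 𝒳).obj (cokernel d') :=
  cokernel.desc _ ((resY 𝒳).map (cokernel.π d'))
    (resY_comp_zero 𝒳 d' (cokernel.π d') (cokernel.condition d'))

/-- In `mod-X`, `F` has projective dimension at most one: there is a short exact sequence
`0 → Hom(-,X₁)|_X → Hom(-,X₀)|_X → F → 0` by representable functors (the projective objects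
of `mod-X`). -/
def PdLeOne (F : FunCat 𝒳) : Prop :=
  ∃ (X₁ X₀ : RMod Λ) (_ : X₁ ∈ 𝒳) (_ : X₀ ∈ 𝒳) (a : (resY 𝒳).obj X₁ ⟶ (resY 𝒳).obj X₀)
    (b : (resY 𝒳).obj X₀ ⟶ F) (w : a ≫ b = 0), (ShortComplex.mk a b w).ShortExact

/-- `F` lies in `Ker ℓ_λ`, where `ℓ_λ` is the left adjoint of the inclusion
`ℓ : mod₀-X → mod-X`; equivalently (by adjunction), `F` admits no nonzero morphism to any
object of `mod₀-X`. -/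
def MemKerEllLambda (F : FunCat 𝒳) : Prop :=
  ∀ G : FunCat 𝒳, FinPres 𝒳 G → Vanish0 𝒳 G → ∀ η : F ⟶ G, η = 0

/-- `F` lies in `Ker ℓ_ρ`, where `ℓ_ρ` is the right adjoint of the inclusion
`ℓ : mod₀-X → mod-X`; equivalently (by adjunction), `F` receives no nonzero morphism from
any object of `mod₀-X`. -/
def MemKerEllRho (F : FunCat 𝒳) : Prop :=
  ∀ G : FunCat 𝒳, FinPres 𝒳 G → Vanish0 𝒳 G → ∀ η : G ⟶ F, η = 0

/-- `F` is a projective object of `mod-X`: every epimorphism of `mod-X` onto `F`'s target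
lifts. -/
def ProjRelModX (F : FunCat 𝒳) : Prop :=
  ∀ (G H : FunCat 𝒳), FinPres 𝒳 G → FinPres 𝒳 H → ∀ e : G ⟶ H, Epi e →
    ∀ f : F ⟶ H, ∃ g : F ⟶ G, g ≫ e = f

end FunctorCategory

/-! The unit `F ⟶ Hom(-, θ F)|_X` is an isomorphism at every projective module `P`, because
`Hom(P, -)` is exact; so its kernel and cokernel vanish on projectives.

For finite presentability, right coherence makes kernels of maps between finitely presented
modules finitely presented, so `Hom(-, M)|_X` is finitely presented for every `M ∈ mod-A`:
approximate `M`, then approximate the kernel of that approximation. Since `X` is closed under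
finite sums, lifting a presentation along representables shows that finitely presented functors
are closed under cokernels. This handles the cokernel of the unit directly, and its kernel is the
cokernel of `Hom(-, X₁)|_X ⟶ Hom(-, Im d)|_X`. -/

section Coherence

variable {R : Type u} [Ring R]

theorem finitePresentation_of_fg_pi (hR : ∀ I : Ideal R, I.FG → Module.FinitePresentation R I) :
    ∀ (n : ℕ) (S : Submodule R (Fin n → R)), S.FG → Module.FinitePresentation R S := by
  intro n
  induction n with
  | zero =>
    intro S _
    infer_instance
  | succ n ih =>
    intro S hS
    have : Module.Finite R S := .of_fg hS
    -- the last coordinate maps `S` onto a finitely generated ideal, with kernel inside `Rⁿ`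
    let p : S →ₗ[R] R := LinearMap.proj (Fin.last n) ∘ₗ S.subtype
    have : Module.FinitePresentation R (LinearMap.range p) := hR _ (Submodule.fg_range p)
    let K := LinearMap.ker p.rangeRestrict
    have : Module.Finite R K :=
      .of_fg (Module.FinitePresentation.fg_ker _ p.surjective_rangeRestrict)
    let init : K →ₗ[R] (Fin n → R) :=
      (LinearMap.pi fun i : Fin n => LinearMap.proj i.castSucc) ∘ₗ S.subtype ∘ₗ K.subtype
    have init_injective : Function.Injective init := by
      intro x y hxy
      have hx : p x = 0 := by simpa [K] using x.2
      have hy : p y = 0 := by simpa [K] using y.2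
      exact Subtype.ext <| Subtype.ext <| funext fun i =>
        Fin.lastCases (hx.trans hy.symm) (fun i => congrFun hxy i) i
    have : Module.FinitePresentation R (LinearMap.range init) :=
      ih _ (Submodule.fg_range init)
    have : Module.FinitePresentation R K :=
      .of_equiv (N := K) (LinearEquiv.ofInjective init init_injective).symm
    exact Module.finitePresentation_of_ker p.rangeRestrict p.surjective_rangeRestrict

theorem finitePresentation_of_fg (hR : ∀ I : Ideal R, I.FG → Module.FinitePresentation R I)
    {M : Type u} [AddCommGroup M] [Module R M] [Module.FinitePresentation R M]
    (S : Submodule R M) (hS : S.FG) : Module.FinitePresentation R S := by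
  obtain ⟨n, m, f, g, hf, hfg⟩ := Module.FinitePresentation.exists_fin' R M
  have ker_fg : (LinearMap.ker f).FG := hfg.linearMap_ker_eq ▸ Submodule.fg_range g
  let T := S.comap f
  have ker_le : LinearMap.ker f ≤ T := fun x hx => by simp [T, LinearMap.mem_ker.mp hx]
  have T_fg : T.FG := by
    refine Submodule.fg_of_fg_map_of_fg_inf_ker f ?_ (by rwa [inf_of_le_right ker_le])
    rwa [Submodule.map_comap_eq_of_surjective hf]
  have : Module.FinitePresentation R T := finitePresentation_of_fg_pi hR n T T_fg
  -- `S ≅ T / ker f`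
  let q : T →ₗ[R] S := f.restrict fun _ hx => hx
  have q_surjective : Function.Surjective q := by
    rintro ⟨y, hy⟩
    obtain ⟨x, rfl⟩ := hf y
    exact ⟨⟨x, hy⟩, rfl⟩
  refine Module.finitePresentation_of_surjective q q_surjective ?_
  refine Submodule.fg_of_fg_map_injective T.subtype T.injective_subtype ?_
  have : (LinearMap.ker q).map T.subtype = LinearMap.ker f := by
    ext x
    simp only [Submodule.mem_map, LinearMap.mem_ker, Submodule.subtype_apply]
    constructor
    · rintro ⟨y, hy, rfl⟩
      exact congrArg Subtype.val hy
    · exact fun hx => ⟨⟨x, ker_le hx⟩, Subtype.ext hx, rfl⟩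
  rwa [this]

theorem finitePresentation_ker (hR : ∀ I : Ideal R, I.FG → Module.FinitePresentation R I)
    {M N : Type u} [AddCommGroup M] [Module R M] [AddCommGroup N] [Module R N]
    [Module.FinitePresentation R M] [Module.FinitePresentation R N] (f : M →ₗ[R] N) :
    Module.FinitePresentation R (LinearMap.ker f) := by
  have : Module.FinitePresentation R (LinearMap.range f) :=
    finitePresentation_of_fg hR _ (Submodule.fg_range f)
  have ker_fg := Module.FinitePresentation.fg_ker _ f.surjective_rangeRestrict
  rw [LinearMap.ker_rangeRestrict] at ker_fg
  exact finitePresentation_of_fg hR _ ker_fg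

end Coherence

section FinitelyPresentedModules

variable {R : Type u} [Ring R]

theorem finitePresentation_cokernel {M N : ModuleCat.{u} R} [Module.Finite R M]
    [Module.FinitePresentation R N] (f : M ⟶ N) :
    Module.FinitePresentation R (cokernel f : ModuleCat.{u} R) :=
  have : Module.FinitePresentation R (N ⧸ LinearMap.range f.hom) :=
    Module.finitePresentation_of_surjective _ (Submodule.mkQ_surjective _) (by simp)
  .of_equiv (ModuleCat.cokernelIsoRangeQuotient f).toLinearEquiv.symm

theorem finitePresentation_kernel (hR : ∀ I : Ideal R, I.FG → Module.FinitePresentation R I)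
    {M N : ModuleCat.{u} R} [Module.FinitePresentation R M] [Module.FinitePresentation R N]
    (f : M ⟶ N) : Module.FinitePresentation R (kernel f : ModuleCat.{u} R) :=
  have := finitePresentation_ker hR f.hom
  .of_equiv (ModuleCat.kernelIsoKer f).toLinearEquiv.symm

theorem ModuleCat.ofHom_prod_comp_ofHom_coprod {X M N P : ModuleCat.{u} R} (r : X ⟶ M)
    (w : X ⟶ N) (b : M ⟶ P) (h : N ⟶ P) :
    ModuleCat.ofHom (r.hom.prod w.hom) ≫ ModuleCat.ofHom (b.hom.coprod h.hom) =
      r ≫ b + w ≫ h := by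
  ext
  simp

end FinitelyPresentedModules

section AddCommGrpValued

variable {J : Type*} [Category J]

theorem exact_of_forall_app {S : ShortComplex (J ⥤ AddCommGrpCat.{u})}
    (h : ∀ (j : J) (y : S.X₂.obj j), S.g.app j y = 0 → ∃ x, S.f.app j x = y) : S.Exact := by
  rw [S.exact_iff_isZero_homology, Functor.isZero_iff]
  intro j
  refine (S.mapHomologyIso ((evaluation J AddCommGrpCat.{u}).obj j)).isZero_iff.mp ?_
  rw [← ShortComplex.exact_iff_isZero_homology, ShortComplex.ab_exact_iff]
  exact h j

theorem _root_.CategoryTheory.ShortComplex.Exact.exists_app_eq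
    {S : ShortComplex (J ⥤ AddCommGrpCat.{u})} (hS : S.Exact) (j : J) (y : S.X₂.obj j)
    (hy : S.g.app j y = 0) : ∃ x, S.f.app j x = y :=
  (ShortComplex.ab_exact_iff _).mp (hS.map ((evaluation J AddCommGrpCat.{u}).obj j)) y hy

theorem epi_of_surjective_app {F G : J ⥤ AddCommGrpCat.{u}} (η : F ⟶ G)
    (h : ∀ j, Function.Surjective (η.app j)) : Epi η :=
  (NatTrans.epi_iff_epi_app η).2 fun j => (AddCommGrpCat.epi_iff_surjective _).2 (h j)

theorem surjective_app_of_epi {F G : J ⥤ AddCommGrpCat.{u}} (η : F ⟶ G) [Epi η] (j : J) :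
    Function.Surjective (η.app j) :=
  (AddCommGrpCat.epi_iff_surjective _).1 inferInstance

theorem injective_app_of_mono {F G : J ⥤ AddCommGrpCat.{u}} (η : F ⟶ G) [Mono η] (j : J) :
    Function.Injective (η.app j) :=
  (AddCommGrpCat.mono_iff_injective _).1 inferInstance

theorem isZero_kernel_obj {F G : J ⥤ AddCommGrpCat.{u}} (g : F ⟶ G) (j : J)
    [IsIso (g.app j)] : IsZero ((kernel g).obj j) :=
  (isZero_zero _).of_iso
    (PreservesKernel.iso ((evaluation J AddCommGrpCat.{u}).obj j) g ≪≫ kernel.ofMono (g.app j))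

theorem isZero_cokernel_obj {F G : J ⥤ AddCommGrpCat.{u}} (g : F ⟶ G) (j : J)
    [IsIso (g.app j)] : IsZero ((cokernel g).obj j) :=
  (isZero_zero _).of_iso
    (PreservesCokernel.iso ((evaluation J AddCommGrpCat.{u}).obj j) g ≪≫
      cokernel.ofEpi (g.app j))

end AddCommGrpValued

section RestrictedYoneda

variable (𝒳 : Set (RMod Λ))

instance : (resY 𝒳).Additive where
  map_add {M _ φ ψ} := by
    ext X (f : X.unop.obj ⟶ M)
    exact Preadditive.comp_add _ _ _ f φ ψ

theorem resY_obj_hom_ext {W : RMod Λ} (hW : W ∈ 𝒳) {G : FunCat 𝒳}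
    {α β : (resY 𝒳).obj W ⟶ G}
    (h : α.app (op ⟨W, hW⟩) (𝟙 W) = β.app (op ⟨W, hW⟩) (𝟙 W)) : α = β := by
  ext X (f : X.unop.obj ⟶ W)
  let u : op (⟨W, hW⟩ : XCat 𝒳) ⟶ X := (ObjectProperty.homMk f).op
  let idW : ((resY 𝒳).obj W).obj (op ⟨W, hW⟩) := 𝟙 W
  have hf : ((resY 𝒳).obj W).map u idW = f := Category.comp_id f
  rw [← hf, NatTrans.naturality_apply, NatTrans.naturality_apply, h]

theorem exists_resY_map_comp_eq {W Z : RMod Λ} (hW : W ∈ 𝒳) {G : FunCat 𝒳}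
    (q : (resY 𝒳).obj Z ⟶ G) [Epi q] (t : (resY 𝒳).obj W ⟶ G) :
    ∃ h : W ⟶ Z, (resY 𝒳).map h ≫ q = t := by
  obtain ⟨h, hh⟩ := surjective_app_of_epi q (op ⟨W, hW⟩) (t.app _ (𝟙 W))
  exact ⟨h, resY_obj_hom_ext 𝒳 hW hh⟩

end RestrictedYoneda

section FinitelyPresentedFunctors

variable (𝒳 : Set (RMod Λ))

variable {𝒳} in
theorem FinPres.of_iso {F G : FunCat 𝒳} (hF : FinPres 𝒳 F) (i : F ≅ G) : FinPres 𝒳 G :=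
  let ⟨X₁, X₀, h₁, h₀, d, ⟨j⟩⟩ := hF
  ⟨X₁, X₀, h₁, h₀, d, ⟨i.symm ≪≫ j⟩⟩

theorem finPres_iff {F : FunCat 𝒳} :
    FinPres 𝒳 F ↔ ∃ (X₁ X₀ : RMod Λ) (_ : X₁ ∈ 𝒳) (_ : X₀ ∈ 𝒳) (d : X₁ ⟶ X₀)
      (p : (resY 𝒳).obj X₀ ⟶ F) (w : (resY 𝒳).map d ≫ p = 0),
      Epi p ∧ (ShortComplex.mk _ p w).Exact := by
  constructor
  · rintro ⟨X₁, X₀, h₁, h₀, d, ⟨i⟩⟩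
    have w : (resY 𝒳).map d ≫ cokernel.π _ ≫ i.inv = 0 := by
      rw [cokernel.condition_assoc, zero_comp]
    refine ⟨X₁, X₀, h₁, h₀, d, cokernel.π _ ≫ i.inv, w, epi_comp _ _, ?_⟩
    let φ : ShortComplex.mk _ _ (cokernel.condition ((resY 𝒳).map d)) ⟶
        ShortComplex.mk _ _ w :=
      { τ₁ := 𝟙 _, τ₂ := 𝟙 _, τ₃ := i.inv }
    exact (ShortComplex.exact_iff_of_epi_of_isIso_of_mono φ).mp (ShortComplex.exact_cokernel _)
  · rintro ⟨X₁, X₀, h₁, h₀, d, p, w, hp, hex⟩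
    exact ⟨X₁, X₀, h₁, h₀, d,
      ⟨(hex.gIsCokernel.coconePointUniqueUpToIso (colimit.isColimit _))⟩⟩

theorem finPres_resY_obj (hΛ : RightCoherent Λ)
    (h𝒳 : GoodSub (fun M : RMod Λ => Module.FinitePresentation Λᵐᵒᵖ M) 𝒳)
    (M : RMod Λ) [Module.FinitePresentation Λᵐᵒᵖ M] : FinPres 𝒳 ((resY 𝒳).obj M) := by
  obtain ⟨Y₀, hY₀, ε, hε⟩ := h𝒳.approx M inferInstance
  have : Module.FinitePresentation Λᵐᵒᵖ Y₀ := h𝒳.mem_mod Y₀ hY₀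
  obtain ⟨Y₁, hY₁, a, ha⟩ := h𝒳.approx (kernel ε) (finitePresentation_kernel hΛ ε)
  refine (finPres_iff 𝒳).2 ⟨Y₁, Y₀, hY₁, hY₀, a ≫ kernel.ι ε, (resY 𝒳).map ε,
    resY_comp_zero 𝒳 _ _ (by simp), ?_, ?_⟩
  · exact epi_of_surjective_app _ fun X (f : X.unop.obj ⟶ M) => hε _ X.unop.property f
  · refine exact_of_forall_app fun X (y : X.unop.obj ⟶ Y₀) (hy : y ≫ ε = 0) => ?_
    obtain ⟨k, hk⟩ := ha _ X.unop.property (kernel.lift ε y hy)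
    refine ⟨k, ?_⟩
    change k ≫ a ≫ kernel.ι ε = y
    rw [reassoc_of% hk, kernel.lift_ι]

theorem finPres_X₃_of_exact
    (h𝒳 : ∀ M N : RMod Λ, M ∈ 𝒳 → N ∈ 𝒳 → ModuleCat.of Λᵐᵒᵖ (M × N) ∈ 𝒳)
    {S : ShortComplex (FunCat 𝒳)} (hS : S.Exact) [Epi S.g]
    (h₁ : FinPres 𝒳 S.X₁) (h₂ : FinPres 𝒳 S.X₂) : FinPres 𝒳 S.X₃ := by
  obtain ⟨-, W, -, hW, -, p, -, hp, -⟩ := (finPres_iff 𝒳).1 h₁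
  obtain ⟨Z₁, Z₀, hZ₁, hZ₀, b, q, hbq, hq, hbq_exact⟩ := (finPres_iff 𝒳).1 h₂
  obtain ⟨h, hh⟩ := exists_resY_map_comp_eq 𝒳 hW q (p ≫ S.f)
  -- `S.X₃` is presented by `(b, h) : Z₁ × W ⟶ Z₀`
  let d : ModuleCat.of Λᵐᵒᵖ (Z₁ × W) ⟶ Z₀ := ModuleCat.ofHom (b.hom.coprod h.hom)
  have hd : d = ModuleCat.ofHom (LinearMap.fst _ _ _) ≫ b +
      ModuleCat.ofHom (LinearMap.snd _ _ _) ≫ h := by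
    rw [← ModuleCat.ofHom_prod_comp_ofHom_coprod]
    rfl
  have w : (resY 𝒳).map d ≫ q ≫ S.g = 0 := by
    simp [hd, reassoc_of% hbq, reassoc_of% hh]
  refine (finPres_iff 𝒳).2 ⟨_, Z₀, h𝒳 _ _ hZ₁ hW, hZ₀, d, q ≫ S.g, w, epi_comp _ _, ?_⟩
  refine exact_of_forall_app fun X (y : X.unop.obj ⟶ Z₀) hy => ?_
  obtain ⟨x, hx⟩ := hS.exists_app_eq X _ hy
  obtain ⟨(v : X.unop.obj ⟶ W), rfl⟩ := surjective_app_of_epi p X x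
  have hqvh : q.app X (v ≫ h) = S.f.app X (p.app X v) :=
    ConcreteCategory.congr_hom (NatTrans.congr_app hh X) v
  have : q.app X (y - v ≫ h) = 0 := by
    rw [show q.app X (y - v ≫ h) = q.app X y - q.app X (v ≫ h) from
      (q.app X).hom.map_sub y (v ≫ h), hqvh]
    exact sub_eq_zero.2 hx.symm
  obtain ⟨(r : X.unop.obj ⟶ Z₁), hr : r ≫ b = y - v ≫ h⟩ :=
    hbq_exact.exists_app_eq X _ this
  refine ⟨ModuleCat.ofHom (r.hom.prod v.hom), ?_⟩
  change ModuleCat.ofHom (r.hom.prod v.hom) ≫ ModuleCat.ofHom (b.hom.coprod h.hom) = y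
  rw [ModuleCat.ofHom_prod_comp_ofHom_coprod, hr, sub_add_cancel]

theorem finPres_cokernel
    (h𝒳 : ∀ M N : RMod Λ, M ∈ 𝒳 → N ∈ 𝒳 → ModuleCat.of Λᵐᵒᵖ (M × N) ∈ 𝒳)
    {F G : FunCat 𝒳} (f : F ⟶ G) (hF : FinPres 𝒳 F) (hG : FinPres 𝒳 G) :
    FinPres 𝒳 (cokernel f) :=
  finPres_X₃_of_exact 𝒳 h𝒳 (ShortComplex.exact_cokernel f) hF hG

end FinitelyPresentedFunctors

section UnitMap

variable (𝒳 : Set (RMod Λ)) {X₁ X₀ : RMod Λ} (d : X₁ ⟶ X₀)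

theorem π_unitMap :
    cokernel.π ((resY 𝒳).map d) ≫ unitMap 𝒳 d = (resY 𝒳).map (cokernel.π d) :=
  cokernel.π_desc _ _ _

theorem unitMap_app_π_app (X : (XCat 𝒳)ᵒᵖ) (q : X.unop.obj ⟶ X₀) :
    (unitMap 𝒳 d).app X ((cokernel.π ((resY 𝒳).map d)).app X q) = q ≫ cokernel.π d :=
  ConcreteCategory.congr_hom (NatTrans.congr_app (π_unitMap 𝒳 d) X) q

theorem cokernel_π_app_comp_eq_zero (X : (XCat 𝒳)ᵒᵖ) (r : X.unop.obj ⟶ X₁) :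
    (cokernel.π ((resY 𝒳).map d)).app X (r ≫ d) = 0 :=
  ConcreteCategory.congr_hom (NatTrans.congr_app (cokernel.condition ((resY 𝒳).map d)) X) r

theorem isIso_unitMap_app (P : XCat 𝒳) [Projective P.obj] :
    IsIso ((unitMap 𝒳 d).app (op P)) := by
  have : Mono ((unitMap 𝒳 d).app (op P)) := by
    refine (AddCommGrpCat.mono_iff_injective _).2 <|
      (injective_iff_map_eq_zero _).2 fun x hx => ?_
    obtain ⟨(q : P.obj ⟶ X₀), rfl⟩ := surjective_app_of_epi (cokernel.π _) (op P) x
    have hq : q ≫ cokernel.π d = 0 := (unitMap_app_π_app 𝒳 d _ q).symm.trans hx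
    -- `q` factors through the image of `d`, hence through `d` since `P` is projective
    have : Projective.factorThru (kernel.lift _ q hq) (Abelian.factorThruImage d) ≫ d = q :=
      calc _ = Projective.factorThru (kernel.lift _ q hq) (Abelian.factorThruImage d) ≫
            Abelian.factorThruImage d ≫ Abelian.image.ι d := by rw [Abelian.image.fac]
        _ = q := by rw [Projective.factorThru_comp_assoc, kernel.lift_ι]
    rw [← this]
    exact cokernel_π_app_comp_eq_zero 𝒳 d _ _
  have : Epi ((unitMap 𝒳 d).app (op P)) := by
    refine (AddCommGrpCat.epi_iff_surjective _).2 fun (m : P.obj ⟶ cokernel d) => ?_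
    let l : P.obj ⟶ X₀ := Projective.factorThru m (cokernel.π d)
    refine ⟨(cokernel.π ((resY 𝒳).map d)).app (op P) l, ?_⟩
    rw [unitMap_app_π_app, Projective.factorThru_comp]
  exact isIso_of_mono_of_epi _

theorem exists_epi_exact_kernel_unitMap :
    ∃ (p : (resY 𝒳).obj (Abelian.image d) ⟶ kernel (unitMap 𝒳 d))
      (w : (resY 𝒳).map (Abelian.factorThruImage d) ≫ p = 0),
      Epi p ∧ (ShortComplex.mk _ p w).Exact := by
  let c := cokernel.π ((resY 𝒳).map d)
  have ht : ((resY 𝒳).map (Abelian.image.ι d) ≫ c) ≫ unitMap 𝒳 d = 0 := by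
    rw [Category.assoc, π_unitMap, ← Functor.map_comp, kernel.condition, Functor.map_zero]
  let p := kernel.lift _ _ ht
  have hp (X : (XCat 𝒳)ᵒᵖ) (q : X.unop.obj ⟶ Abelian.image d) :
      (kernel.ι (unitMap 𝒳 d)).app X (p.app X q) = c.app X (q ≫ Abelian.image.ι d) :=
    ConcreteCategory.congr_hom (NatTrans.congr_app (kernel.lift_ι _ _ ht) X) q
  have w : (resY 𝒳).map (Abelian.factorThruImage d) ≫ p = 0 := by
    rw [← cancel_mono (kernel.ι _), Category.assoc, kernel.lift_ι, zero_comp,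
      ← Functor.map_comp_assoc, Abelian.image.fac, cokernel.condition]
  refine ⟨p, w, epi_of_surjective_app _ fun X v => ?_,
    exact_of_forall_app fun X (q : X.unop.obj ⟶ Abelian.image d) hq => ?_⟩
  · obtain ⟨(q : X.unop.obj ⟶ X₀), hq⟩ :=
      surjective_app_of_epi c X ((kernel.ι (unitMap 𝒳 d)).app X v)
    have hqπ : q ≫ cokernel.π d = 0 := by
      rw [← unitMap_app_π_app, hq]
      exact ConcreteCategory.congr_hom (NatTrans.congr_app (kernel.condition (unitMap 𝒳 d)) X) v
    refine ⟨kernel.lift _ q hqπ, injective_app_of_mono (kernel.ι (unitMap 𝒳 d)) X ?_⟩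
    rw [hp, kernel.lift_ι, hq]
  · have : c.app X (q ≫ Abelian.image.ι d) = 0 := by
      rw [← hp, show p.app X q = 0 from hq, map_zero]
    obtain ⟨(r : X.unop.obj ⟶ X₁), hr : r ≫ d = q ≫ Abelian.image.ι d⟩ :=
      (ShortComplex.exact_cokernel _).exists_app_eq X _ this
    refine ⟨r, (cancel_mono (Abelian.image.ι d)).1 ?_⟩
    change (r ≫ Abelian.factorThruImage d) ≫ Abelian.image.ι d = _
    rw [Category.assoc, Abelian.image.fac, hr]

end UnitMap

/-- For a right coherent ring `A` and contravariantly finite `X ⊇ prj-A`, for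
every finitely presented functor `F` (presented by `d' : X₁ ⟶ X₀`) there is an exact sequence
`0 → F₀ → F → Hom(-, θ(F))|_X → F₁ → 0` with `F₀, F₁ ∈ mod₀-X`, where `θ(F) = coker d'` and
the middle map is the unit of the adjunction `(θ, θ_ρ)`. -/
theorem statement1 (A : Type u) [Ring A] (hA : RightCoherent A)
    (𝒳 : Set (RMod A))
    (h𝒳 : GoodSub (fun M : RMod A => Module.FinitePresentation Aᵐᵒᵖ M) 𝒳)
    (F : FunCat 𝒳) (X₁ X₀ : RMod A) (hX₁ : X₁ ∈ 𝒳) (hX₀ : X₀ ∈ 𝒳)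
    (d' : X₁ ⟶ X₀) (e : F ≅ cokernel ((resY 𝒳).map d')) :
    ∃ (F₀ F₁ : FunCat 𝒳) (a : F₀ ⟶ F) (b : (resY 𝒳).obj (cokernel d') ⟶ F₁)
      (w₁ : a ≫ (e.hom ≫ unitMap 𝒳 d') = 0)
      (w₂ : (e.hom ≫ unitMap 𝒳 d') ≫ b = 0),
      FinPres 𝒳 F₀ ∧ Vanish0 𝒳 F₀ ∧ FinPres 𝒳 F₁ ∧ Vanish0 𝒳 F₁ ∧
      Mono a ∧ Epi b ∧
      (ShortComplex.mk a (e.hom ≫ unitMap 𝒳 d') w₁).Exact ∧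
      (ShortComplex.mk (e.hom ≫ unitMap 𝒳 d') b w₂).Exact := by
  have : Module.FinitePresentation Aᵐᵒᵖ X₁ := h𝒳.mem_mod X₁ hX₁
  have : Module.FinitePresentation Aᵐᵒᵖ X₀ := h𝒳.mem_mod X₀ hX₀
  have : Module.FinitePresentation Aᵐᵒᵖ (cokernel d' : RMod A) :=
    finitePresentation_cokernel d'
  have : Module.FinitePresentation Aᵐᵒᵖ (Abelian.image d' : RMod A) :=
    finitePresentation_kernel hA (cokernel.π d')
  have iso_at_projective (P : XCat 𝒳) (hP : Projective P.obj) :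
      IsIso ((e.hom ≫ unitMap 𝒳 d').app (op P)) := by
    rw [NatTrans.comp_app]
    have := isIso_unitMap_app 𝒳 d' P
    infer_instance
  refine ⟨_, _, kernel.ι _, cokernel.π _, kernel.condition _, cokernel.condition _,
    ?_, fun P hP => ?_, ?_, fun P hP => ?_, inferInstance, inferInstance,
    ShortComplex.exact_kernel _, ShortComplex.exact_cokernel _⟩
  · obtain ⟨_, _, _, hexact⟩ := exists_epi_exact_kernel_unitMap 𝒳 d'
    exact (finPres_X₃_of_exact 𝒳 h𝒳.sum_mem hexact (finPres_resY_obj 𝒳 hA h𝒳 X₁)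
      (finPres_resY_obj 𝒳 hA h𝒳 _)).of_iso (kernelIsIsoComp e.hom _).symm
  · have := iso_at_projective P hP
    exact isZero_kernel_obj _ _
  · exact finPres_cokernel 𝒳 h𝒳.sum_mem _ ⟨X₁, X₀, hX₁, hX₀, d', ⟨e⟩⟩
      (finPres_resY_obj 𝒳 hA h𝒳 _)
  · have := iso_at_projective P hP
    exact isZero_cokernel_obj _ _

end RelAus
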